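/- arXiv:1603.07912 — 3 statements merged into one kernel-verified Lean document; each statement's English description precedes it below -/
import Mathlib

section
/- Let M = F_q[x]. The monoid homomorphism σ: A^+ → M defined by σ(a) = x^{deg_θ(a)} is not a semi-character; that is, there do not exist pairwise commuting F_q-algebra homomorphisms σ_1, ..., σ_s: F_q[θ] → F_q[x] with σ(a) = σ_1(a)···σ_s(a) for all monic a. -/
/-!
Evaluating a factorisation `σ = σ₁ ⋯ σₛ` at the monic polynomials `X` and `X + 1` gives
`X = ∏ σᵢ(X) = ∏ (σᵢ(X) + 1)`. As `X` is prime, `X ∣ σᵢ(X) + 1` for some `i`, while also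
`σᵢ(X) ∣ X`; in `F[X]` this forces `σᵢ(X) + 1 = 0`, so the second product vanishes.
-/

open Polynomial

/- A divisor of `X` is a nonzero constant or an associate of `X`; `X ∣ a + 1` excludes the
latter and, for a constant `a`, forces `a + 1 = 0`. -/
theorem Polynomial.add_one_eq_zero_of_dvd_X_of_X_dvd_add_one {K : Type*} [Field K] {a : K[X]}
    (ha : a ∣ X) (hX : X ∣ a + 1) : a + 1 = 0 := by
  rcases irreducible_X.dvd_iff.mp ha with hunit | hassoc
  · obtain ⟨r, -, rfl⟩ := isUnit_iff.mp hunit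
    rw [← C_1, ← C_add, X_dvd_iff, coeff_C_zero] at hX
    rw [← C_1, ← C_add, hX, C_0]
  · have hX_dvd_one : (X : K[X]) ∣ 1 := (dvd_add_right hassoc.dvd).mp hX
    rw [X_dvd_iff, coeff_one_zero] at hX_dvd_one
    exact absurd hX_dvd_one one_ne_zero

theorem stmt2_general (Fq : Type*) [Field Fq] :
    ¬ ∃ (s : ℕ) (σ : Fin s → (Polynomial Fq →ₐ[Fq] Polynomial Fq)),
      (∀ (i j : Fin s) (a b : Polynomial Fq), σ i a * σ j b = σ j b * σ i a) ∧
      (∀ a : Polynomial Fq, a.Monic →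
        (Polynomial.X : Polynomial Fq) ^ a.natDegree = ∏ i, σ i a) := by
  rintro ⟨s, σ, -, hσ⟩
  have hX : (X : Fq[X]) = ∏ i, σ i X := by simpa using hσ X monic_X
  have hX_add_one : (X : Fq[X]) = ∏ i, (σ i X + 1) := by
    have h := hσ (X + C 1) (monic_X_add_C 1)
    rw [natDegree_X_add_C, pow_one] at h
    simpa using h
  obtain ⟨i, -, hi⟩ := (prime_X.dvd_finsetProd_iff _).mp (dvd_of_eq hX_add_one)
  have hσi_dvd : σ i X ∣ X :=
    (Finset.dvd_prod_of_mem (fun j ↦ σ j X) (Finset.mem_univ i)).trans (dvd_of_eq hX.symm)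
  refine X_ne_zero (hX_add_one.trans (Finset.prod_eq_zero (Finset.mem_univ i) ?_))
  exact add_one_eq_zero_of_dvd_X_of_X_dvd_add_one hσi_dvd hi

/-- The monoid homomorphism `σ : A⁺ → F_q[x]`, `a ↦ x^{deg_θ a}`, on monic
polynomials of `A = F_q[θ]`, is not a semi-character: it is not a finite product of
pairwise commuting `F_q`-algebra homomorphisms `F_q[θ] → F_q[x]`. -/
theorem stmt2 (Fq : Type*) [Field Fq] [Fintype Fq] :
    ¬ ∃ (s : ℕ) (σ : Fin s → (Polynomial Fq →ₐ[Fq] Polynomial Fq)),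
      (∀ (i j : Fin s) (a b : Polynomial Fq), σ i a * σ j b = σ j b * σ i a) ∧
      (∀ a : Polynomial Fq, a.Monic →
        (Polynomial.X : Polynomial Fq) ^ a.natDegree = ∏ i, σ i a) :=
  stmt2_general Fq
end

section
/- Let K be a field containing F_q with q > 2, let σ: F_q[θ] → Mat_{d×d}(K) be an F_q-algebra homomorphism, and let ρ_σ: GL_2(F_q[θ]) → GL_{2d}(K) be the associated block representation. Then ρ_σ is irreducible (i.e., no nonzero proper subspace of K^{2d} is invariant under all ρ_σ(γ)) if and only if σ is irreducible (i.e., no nonzero proper subspace of K^d is invariant under all σ(a), a ∈ F_q[θ]). -/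
/-- The block map `ρ_σ` associated to an algebra representation
`σ : F_q[θ] → Mat_{d×d}(K)`. -/
noncomputable def rhoSigma' {Fq K : Type*} [Field Fq] [Field K] [Algebra Fq K] {d : ℕ}
    (σ : Polynomial Fq →ₐ[Fq] Matrix (Fin d) (Fin d) K)
    (γ : GL (Fin 2) (Polynomial Fq)) :
    Matrix (Fin d ⊕ Fin d) (Fin d ⊕ Fin d) K :=
  Matrix.fromBlocks (σ ((γ : Matrix (Fin 2) (Fin 2) (Polynomial Fq)) 0 0))
    (σ ((γ : Matrix (Fin 2) (Fin 2) (Polynomial Fq)) 0 1))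
    (σ ((γ : Matrix (Fin 2) (Fin 2) (Polynomial Fq)) 1 0))
    (σ ((γ : Matrix (Fin 2) (Fin 2) (Polynomial Fq)) 1 1))

/-!
If `W ≤ K^d` is `σ`-invariant then `W ⊕ W` is `ρ_σ`-invariant, and it is `0` or everything
exactly when `W` is. Conversely, let `V` be `ρ_σ`-invariant. As `q > 2` there is a unit
`u ≠ 1` of `F_q`, and `diag(u, 1)` scales the first block by `u`; subtracting, `V` is the direct
sum `V₁ ⊕ V₂` of its intersections with the two blocks. The unipotents `(1 a; 0 1)` and
`(1 0; a 1)` give `σ(a) V₂ ⊆ V₁` and `σ(a) V₁ ⊆ V₂`; with `a = 1` this forces `V₁ = V₂`,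
which is then `σ`-invariant, so `V = V₁ ⊕ V₁` is `0` or everything when `σ` is irreducible.
-/

open Matrix Polynomial

theorem Sum.elim_smul_smul {R α β γ : Type*} [SMul R γ] (c : R) (a : α → γ) (b : β → γ) :
    Sum.elim (c • a) (c • b) = c • Sum.elim a b :=
  (Sum.comp_elim (c • ·) a b).symm

namespace Submodule

variable {R M ι κ : Type*} [Semiring R] [AddCommMonoid M] [Module R M]

def sumPi (W₁ : Submodule R (ι → M)) (W₂ : Submodule R (κ → M)) : Submodule R (ι ⊕ κ → M) :=
  (W₁.prod W₂).comap (LinearEquiv.sumPiEquivProdPi R ι κ fun _ => M).toLinearMap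

theorem mem_sumPi {W₁ : Submodule R (ι → M)} {W₂ : Submodule R (κ → M)} {v : ι ⊕ κ → M} :
    v ∈ W₁.sumPi W₂ ↔ v ∘ Sum.inl ∈ W₁ ∧ v ∘ Sum.inr ∈ W₂ :=
  Iff.rfl

theorem sumPi_eq_bot_iff {W₁ : Submodule R (ι → M)} {W₂ : Submodule R (κ → M)} :
    W₁.sumPi W₂ = ⊥ ↔ W₁ = ⊥ ∧ W₂ = ⊥ := by
  rw [sumPi, comap_equiv_eq_map_symm, Submodule.map_eq_bot_iff, prod_eq_bot_iff]

theorem sumPi_eq_top_iff {W₁ : Submodule R (ι → M)} {W₂ : Submodule R (κ → M)} :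
    W₁.sumPi W₂ = ⊤ ↔ W₁ = ⊤ ∧ W₂ = ⊤ := by
  rw [sumPi, comap_equiv_eq_map_symm, Submodule.map_eq_top_iff, prod_eq_top_iff]

def sumPiInl (V : Submodule R (ι ⊕ κ → M)) : Submodule R (ι → M) :=
  V.comap ((LinearEquiv.sumPiEquivProdPi R ι κ fun _ => M).symm.toLinearMap ∘ₗ
    LinearMap.inl R _ _)

theorem mem_sumPiInl {V : Submodule R (ι ⊕ κ → M)} {x : ι → M} :
    x ∈ V.sumPiInl ↔ x ⊕ᵥ 0 ∈ V :=
  Iff.rfl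

end Submodule

theorem exists_units_ne_one_of_two_lt_card {G₀ : Type*} [GroupWithZero G₀] [Fintype G₀]
    (h : 2 < Fintype.card G₀) : ∃ u : G₀ˣ, u ≠ 1 := by
  classical
  exact Fintype.exists_ne_of_one_lt_card (by rw [Fintype.card_units]; omega) 1

open Submodule

section BlockRepresentation

variable {Fq K : Type*} [Field Fq] [Field K] [Algebra Fq K] {d : ℕ}

def IsRhoSigmaInvariant (σ : Fq[X] →ₐ[Fq] Matrix (Fin d) (Fin d) K)
    (V : Submodule K (Fin d ⊕ Fin d → K)) : Prop :=
  ∀ γ : GL (Fin 2) Fq[X], ∀ v ∈ V, rhoSigma' σ γ *ᵥ v ∈ V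

variable {σ : Fq[X] →ₐ[Fq] Matrix (Fin d) (Fin d) K}

theorem rhoSigma'_mulVec_sumElim (γ : GL (Fin 2) Fq[X]) (x y : Fin d → K) :
    rhoSigma' σ γ *ᵥ (x ⊕ᵥ y) =
      (σ (γ.val 0 0) *ᵥ x + σ (γ.val 0 1) *ᵥ y) ⊕ᵥ (σ (γ.val 1 0) *ᵥ x + σ (γ.val 1 1) *ᵥ y) := by
  rw [rhoSigma', fromBlocks_mulVec, Sum.elim_comp_inl, Sum.elim_comp_inr]

theorem sumPi_isRhoSigmaInvariant {W : Submodule K (Fin d → K)}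
    (hW : ∀ a : Fq[X], ∀ w ∈ W, σ a *ᵥ w ∈ W) : IsRhoSigmaInvariant σ (W.sumPi W) := by
  intro γ v hv
  rw [← Sum.elim_comp_inl_inr v, rhoSigma'_mulVec_sumElim, mem_sumPi, Sum.elim_comp_inl,
    Sum.elim_comp_inr]
  exact ⟨W.add_mem (hW _ _ hv.1) (hW _ _ hv.2), W.add_mem (hW _ _ hv.1) (hW _ _ hv.2)⟩

namespace IsRhoSigmaInvariant

variable {V : Submodule K (Fin d ⊕ Fin d → K)} {x y : Fin d → K}

theorem sumElim_mem_of_isUnit_det (hV : IsRhoSigmaInvariant σ V) {p q r s : Fq[X]}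
    (h : IsUnit (!![p, q; r, s]).det) (hxy : x ⊕ᵥ y ∈ V) :
    (σ p *ᵥ x + σ q *ᵥ y) ⊕ᵥ (σ r *ᵥ x + σ s *ᵥ y) ∈ V := by
  simpa [rhoSigma'_mulVec_sumElim] using hV (GeneralLinearGroup.mk'' _ h) _ hxy

theorem sumElim_add_mulVec_mem (hV : IsRhoSigmaInvariant σ V) (a : Fq[X])
    (hxy : x ⊕ᵥ y ∈ V) : (x + σ a *ᵥ y) ⊕ᵥ y ∈ V := by
  simpa using hV.sumElim_mem_of_isUnit_det (p := 1) (q := a) (r := 0) (s := 1)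
    (by simp [det_fin_two]) hxy

theorem sumElim_mulVec_add_mem (hV : IsRhoSigmaInvariant σ V) (a : Fq[X])
    (hxy : x ⊕ᵥ y ∈ V) : x ⊕ᵥ (σ a *ᵥ x + y) ∈ V := by
  simpa using hV.sumElim_mem_of_isUnit_det (p := 1) (q := 0) (r := a) (s := 1)
    (by simp [det_fin_two]) hxy

theorem sumElim_smul_mem (hV : IsRhoSigmaInvariant σ V) (u : Fqˣ) (hxy : x ⊕ᵥ y ∈ V) :
    ((u : Fq) • x) ⊕ᵥ y ∈ V := by
  have hC : σ (C (u : Fq)) *ᵥ x = (u : Fq) • x := by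
    rw [C_eq_algebraMap, AlgHom.commutes, Algebra.algebraMap_eq_smul_one, smul_mulVec,
      one_mulVec]
  simpa [hC] using hV.sumElim_mem_of_isUnit_det (p := C (u : Fq)) (q := 0) (r := 0) (s := 1)
    (by simp [det_fin_two]) hxy

theorem sumElim_zero_mem (hV : IsRhoSigmaInvariant σ V) {u : Fqˣ} (hu : u ≠ 1)
    (hxy : x ⊕ᵥ y ∈ V) : x ⊕ᵥ (0 : Fin d → K) ∈ V ∧ (0 : Fin d → K) ⊕ᵥ y ∈ V := by
  have hx : x ⊕ᵥ (0 : Fin d → K) ∈ V := by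
    have h : (((u : Fq) - 1) • x) ⊕ᵥ (0 : Fin d → K) ∈ V := by
      simpa [sub_smul, ← Sum.elim_sub_sub] using V.sub_mem (hV.sumElim_smul_mem u hxy) hxy
    have hu' : (u : Fq) - 1 ≠ 0 := sub_ne_zero.mpr (Units.val_eq_one.not.mpr hu)
    simpa [← Sum.elim_smul_smul, smul_smul, inv_mul_cancel₀ hu'] using
      V.smul_of_tower_mem ((u : Fq) - 1)⁻¹ h
  refine ⟨hx, ?_⟩
  simpa [← Sum.elim_sub_sub] using V.sub_mem hxy hx

theorem sumElim_zero_left_mem_iff (hV : IsRhoSigmaInvariant σ V) {u : Fqˣ} (hu : u ≠ 1) :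
    (0 : Fin d → K) ⊕ᵥ y ∈ V ↔ y ∈ V.sumPiInl := by
  rw [mem_sumPiInl]
  constructor
  · intro h
    simpa using (hV.sumElim_zero_mem hu (hV.sumElim_add_mulVec_mem 1 h)).1
  · intro h
    simpa using (hV.sumElim_zero_mem hu (hV.sumElim_mulVec_add_mem 1 h)).2

theorem eq_sumPi_sumPiInl (hV : IsRhoSigmaInvariant σ V) {u : Fqˣ} (hu : u ≠ 1) :
    V = V.sumPiInl.sumPi V.sumPiInl := by
  ext v
  obtain ⟨x, y, rfl⟩ : ∃ x y, v = x ⊕ᵥ y := ⟨_, _, (Sum.elim_comp_inl_inr v).symm⟩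
  rw [mem_sumPi, Sum.elim_comp_inl, Sum.elim_comp_inr, mem_sumPiInl,
    ← hV.sumElim_zero_left_mem_iff hu]
  exact ⟨hV.sumElim_zero_mem hu, fun h => by simpa [← Sum.elim_add_add] using V.add_mem h.1 h.2⟩

theorem mulVec_mem_sumPiInl (hV : IsRhoSigmaInvariant σ V) {u : Fqˣ} (hu : u ≠ 1) (a : Fq[X])
    (hx : x ∈ V.sumPiInl) : σ a *ᵥ x ∈ V.sumPiInl := by
  rw [← hV.sumElim_zero_left_mem_iff hu]
  simpa using (hV.sumElim_zero_mem hu (hV.sumElim_mulVec_add_mem a hx)).2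

end IsRhoSigmaInvariant

end BlockRepresentation

/-- (for `q > 2`) the block representation `ρ_σ` of `GL_2(F_q[θ])` on `K^{2d}`
is irreducible iff the algebra representation `σ` is irreducible on `K^d`. -/
theorem stmt4 (Fq K : Type*) [Field Fq] [Fintype Fq] (hq : 2 < Fintype.card Fq)
    [Field K] [Algebra Fq K] (d : ℕ)
    (σ : Polynomial Fq →ₐ[Fq] Matrix (Fin d) (Fin d) K) :
    (∀ V : Submodule K (Fin d ⊕ Fin d → K),
      (∀ γ : GL (Fin 2) (Polynomial Fq), ∀ v ∈ V, (rhoSigma' σ γ).mulVec v ∈ V) →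
        V = ⊥ ∨ V = ⊤) ↔
    (∀ W : Submodule K (Fin d → K),
      (∀ a : Polynomial Fq, ∀ w ∈ W, (σ a).mulVec w ∈ W) → W = ⊥ ∨ W = ⊤) := by
  constructor
  · intro hρ W hW
    simpa [sumPi_eq_bot_iff, sumPi_eq_top_iff] using hρ _ (sumPi_isRhoSigmaInvariant hW)
  · intro hσ V (hV : IsRhoSigmaInvariant σ V)
    obtain ⟨u, hu⟩ := exists_units_ne_one_of_two_lt_card hq
    rw [hV.eq_sumPi_sumPiInl hu, sumPi_eq_bot_iff, sumPi_eq_top_iff, and_self, and_self]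
    exact hσ _ fun a _ => hV.mulVec_mem_sumPiInl hu a
end

section
/- Let C be a complete nonarchimedean valued field, and let f(t) = Σ_{i≥0} f_i t^i with f_i ∈ C and f_i → 0 (an element of the Tate algebra over C). Let λ be an element of an algebraic closure of F_q(t_1,...,t_s) not lying in the algebraic closure of F_q. If f ≠ 0, then Σ_{i≥0} f_i λ^i converges in the completed fraction field of C ⊗_{F_q} F_q(t_1,...,t_s)^{ac} (with the tensor factor carrying the trivial norm) to a nonzero element. -/
open Filter

lemma aux_linearIndependent_pow {F A : Type*} [Field F] [CommRing A] [Nontrivial A]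
    [Algebra F A] {x : A} (hx : Transcendental F x) :
    LinearIndependent F (fun i : ℕ => x ^ i) := by
  have hinj : Function.Injective (Polynomial.aeval x : Polynomial F →ₐ[F] A) :=
    transcendental_iff_injective.mp hx
  have hb := (Polynomial.basisMonomials F).linearIndependent
  have h := hb.map' (Polynomial.aeval x : Polynomial F →ₐ[F] A).toLinearMap
    (LinearMap.ker_eq_bot.mpr hinj)
  have : ((Polynomial.aeval x : Polynomial F →ₐ[F] A).toLinearMap ∘
      (Polynomial.basisMonomials F : ℕ → Polynomial F)) = fun i : ℕ => x ^ i := by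
    funext i
    simp [Polynomial.coe_basisMonomials, Polynomial.aeval_monomial]
  rwa [this] at h

/-- let `C` be a complete ultrametric valued field containing `F_q[θ]`, and
let `f = Σ f_i t^i` be a nonzero element of the Tate algebra over `C` (`f_i → 0`). Let
`λ` be an element of an algebraic closure `K^{ac}` of `K_s = F_q(t_1,…,t_s)` which is not
algebraic over `F_q`. Then, in the completion `L = K^♯` of `Frac(C ⊗_{F_q} K^{ac})`
(where `K^{ac}` carries the trivial norm and the norm is the Gauss norm), the series
`Σ f_i λ^i` converges to a nonzero element. -/
theorem stmt16 (Fq : Type*) [Field Fq] [Fintype Fq] (s : ℕ)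
    (C : Type*) [NormedField C] [CompleteSpace C] [IsUltrametricDist C]
    [Algebra Fq C] [Algebra (Polynomial Fq) C]
    (L : Type*) [NormedField L] [CompleteSpace L] [IsUltrametricDist L]
    (ιC : C →+* L)
    (ι : AlgebraicClosure (FractionRing (MvPolynomial (Fin s) Fq)) →+* L)
    -- `ιC` is an isometric embedding of `C`
    (hιC : ∀ c : C, ‖ιC c‖ = ‖c‖)
    -- `K^{ac}` carries the trivial norm
    (hι : ∀ x : AlgebraicClosure (FractionRing (MvPolynomial (Fin s) Fq)),
      x ≠ 0 → ‖ι x‖ = 1)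
    -- the two embeddings agree on `F_q`
    (hcompat : ∀ x : Fq, ιC (algebraMap Fq C x) =
      ι (algebraMap Fq (AlgebraicClosure (FractionRing (MvPolynomial (Fin s) Fq))) x))
    -- the norm on `L` is the Gauss norm on `C ⊗_{F_q} K^{ac}`
    (hGauss : ∀ (n : ℕ) (c : Fin n → C)
      (b : Fin n → AlgebraicClosure (FractionRing (MvPolynomial (Fin s) Fq))),
      LinearIndependent Fq b → ‖∑ j, ιC (c j) * ι (b j)‖ = ⨆ j, ‖c j‖)
    -- `L` is the completion of the fraction field generated by `C` and `K^{ac}`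
    (hdense : closure ((Subfield.closure (Set.range ιC ∪ Set.range ι) : Subfield L) : Set L)
      = Set.univ)
    (f : ℕ → C) (hf0 : Tendsto f atTop (nhds 0)) (hfne : f ≠ 0)
    (lam : AlgebraicClosure (FractionRing (MvPolynomial (Fin s) Fq)))
    (hlam : ¬ IsAlgebraic Fq lam) :
    Summable (fun i : ℕ => ιC (f i) * ι lam ^ i) ∧
    (∑' i : ℕ, ιC (f i) * ι lam ^ i) ≠ 0 := by
  classical
  have hlam0 : lam ≠ 0 := fun h => hlam (h ▸ isAlgebraic_zero)
  have hnorml : ‖ι lam‖ = 1 := hι lam hlam0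
  set g : ℕ → L := fun i => ιC (f i) * ι lam ^ i with hg
  have hnorm : ∀ i : ℕ, ‖g i‖ = ‖f i‖ := by
    intro i
    rw [hg]
    simp only []
    rw [norm_mul, norm_pow, hnorml, one_pow, mul_one, hιC]
  -- norms tend to zero
  have hfnorm : Tendsto (fun i => ‖f i‖) atTop (nhds 0) :=
    tendsto_zero_iff_norm_tendsto_zero.mp hf0
  have hterm : Tendsto g atTop (nhds 0) := by
    rw [tendsto_zero_iff_norm_tendsto_zero]
    simpa only [hnorm] using hfnorm
  have hsum : Summable g :=
    NonarchimedeanAddGroup.summable_of_tendsto_cofinite_zero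
      (by rwa [Nat.cofinite_eq_atTop])
  refine ⟨hsum, ?_⟩
  -- linear independence of powers of lam
  have hli : LinearIndependent Fq (fun i : ℕ => lam ^ i) :=
    aux_linearIndependent_pow hlam
  -- pick an index with f i₀ ≠ 0
  obtain ⟨i₀, hi₀⟩ : ∃ i, f i ≠ 0 := by
    by_contra h
    push_neg at h
    exact hfne (funext h)
  have hMpos : (0 : ℝ) < ‖f i₀‖ := norm_pos_iff.mpr hi₀
  obtain ⟨N₀, hN₀⟩ := Metric.tendsto_atTop.mp hfnorm (‖f i₀‖ / 2) (by positivity)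
  set N : ℕ := max N₀ (i₀ + 1) with hN
  have hi₀N : i₀ < N := lt_of_lt_of_le (Nat.lt_succ_self i₀) (le_max_right _ _)
  -- the partial sum has norm = sup of the first N coefficient norms
  have hpartial : ‖∑ j : Fin N, g j‖ = ⨆ j : Fin N, ‖f (j : ℕ)‖ := by
    have h := hGauss N (fun j => f (j : ℕ)) (fun j => lam ^ (j : ℕ))
      (hli.comp (Fin.val : Fin N → ℕ) Fin.val_injective)
    simpa only [map_pow] using h
  have hbdd : BddAbove (Set.range fun j : Fin N => ‖f (j : ℕ)‖) :=
    (Set.finite_range _).bddAbove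
  have hple : ‖f i₀‖ ≤ ‖∑ j : Fin N, g j‖ := by
    rw [hpartial]
    exact le_ciSup hbdd ⟨i₀, hi₀N⟩
  -- the tail is small
  have htail : ‖∑' i : ℕ, g (i + N)‖ ≤ ‖f i₀‖ / 2 := by
    apply IsUltrametricDist.norm_tsum_le_of_forall_le_of_nonneg (by positivity)
    intro i
    rw [hnorm]
    have h1 : N₀ ≤ i + N := le_trans (le_max_left _ _) (Nat.le_add_left N i)
    have := hN₀ (i + N) h1
    rw [Real.dist_eq, sub_zero, abs_of_nonneg (norm_nonneg _)] at this
    exact this.le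
  -- split the sum
  intro h0
  have hsplit : (∑ i ∈ Finset.range N, g i) + ∑' i : ℕ, g (i + N) = ∑' i : ℕ, g i :=
    Summable.sum_add_tsum_nat_add N hsum
  rw [h0] at hsplit
  have hneg : (∑ i ∈ Finset.range N, g i) = -(∑' i : ℕ, g (i + N)) :=
    eq_neg_of_add_eq_zero_left hsplit
  have hrange : (∑ i ∈ Finset.range N, g i) = ∑ j : Fin N, g j :=
    (Fin.sum_univ_eq_sum_range g N).symm
  have : ‖∑ j : Fin N, g j‖ ≤ ‖f i₀‖ / 2 := by
    rw [← hrange, hneg, norm_neg]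
    exact htail
  have : ‖f i₀‖ ≤ ‖f i₀‖ / 2 := le_trans hple this
  linarith
end
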